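/- For all r, s ∈ ℤ and every β ∈ ℤ, the trace cocycle evaluated on the β-twisted Virasoro generators satisfies c_Lie(L_r^{(β)}, L_s^{(β)}) = n·δ_{r,−s}·((r³−r)/6)·(1−6β+6β²), where L_r^{(β)} is the endomorphism of V given by v ↦ z^{r+1} • v′ + β(r+1)·z^r • v. -/

import Mathlib

noncomputable section

abbrev K : Type := LaurentSeries ℂ

abbrev V (n : ℕ) : Type := Fin n → K

/-- The formal derivative of a Laurent series. -/
def fd (f : K) : K :=
  ⟨fun k => ((k + 1 : ℤ) : ℂ) * f.coeff (k + 1), by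
    apply Set.IsPWO.mono (f.isPWO_support.image_of_monotone
      (f := fun x => x - 1) (fun _ _ h => sub_le_sub_right h 1))
    intro k hk
    have : f.coeff (k + 1) ≠ 0 := by
      intro h
      simp [Function.mem_support, h] at hk
    exact ⟨k + 1, this, by ring⟩⟩

/-- Truncation of a Laurent series to its coefficients in negative degrees: the
projection onto `K₋` along `K₊`. -/
def tneg (f : K) : K :=
  ⟨fun k => if k < 0 then f.coeff k else 0, by
    refine f.isPWO_support.mono (fun k hk => ?_)
    simp only [Function.mem_support] at hk ⊢
    by_cases h : k < 0
    · simpa [h] using hk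
    · simp [h] at hk⟩

/-- Truncation of a Laurent series to its coefficients in non-negative degrees: the
projection onto `K₊` along `K₋`. -/
def tpos (f : K) : K :=
  ⟨fun k => if 0 ≤ k then f.coeff k else 0, by
    refine f.isPWO_support.mono (fun k hk => ?_)
    simp only [Function.mem_support] at hk ⊢
    by_cases h : (0:ℤ) ≤ k
    · simpa [h] using hk
    · simp [h] at hk⟩

/-- Componentwise projection of `V` onto `V₋` along `V₊`. -/
def projM {n : ℕ} (v : V n) : V n := fun i => tneg (v i)

/-- Componentwise projection of `V` onto `V₊` along `V₋`. -/
def projP {n : ℕ} (v : V n) : V n := fun i => tpos (v i)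

/-- The basis vector `z^m · e_i` of `V`. -/
def bas (n : ℕ) (m : ℤ) (i : Fin n) : V n :=
  fun j => if j = i then HahnSeries.single m 1 else 0

/-- `T₁^{+−} ∘ T₂^{−+} − T₂^{+−} ∘ T₁^{−+}` as a map `V₋ → V₋` (evaluated through the
projections onto `V₋` and `V₊`). -/
def commPM {n : ℕ} (T₁ T₂ : V n → V n) (v : V n) : V n :=
  projM (T₁ (projP (T₂ (projM v)))) - projM (T₂ (projP (T₁ (projM v))))

/-- The trace cocycle `c_Lie(T₁, T₂) = Tr(T₁^{+−} T₂^{−+} − T₂^{+−} T₁^{−+})`, computed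
as the (finitely supported) sum of the diagonal coefficients in the basis
`{z^m e_i : m < 0, i}` of `V₋`. -/
def cLie (n : ℕ) (T₁ T₂ : V n → V n) : ℂ :=
  ∑ᶠ (m : ℤ) (_ : m < 0) (i : Fin n), ((commPM T₁ T₂ (bas n m i)) i).coeff m

/-- The `β`-twisted Virasoro operator `L_r^{(β)} : v ↦ z^{r+1} • v′ + β(r+1) z^r • v`,
acting componentwise on `V`. -/
def Lb (n : ℕ) (β r : ℤ) : V n → V n :=
  fun v i => HahnSeries.single (r + 1) 1 * fd (v i)
    + (β * (r + 1)) • (HahnSeries.single r 1 * v i)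

/-!
`L_r^{(β)}` sends `z^m e_i` to `(m + β(r+1)) z^{m+r} e_i`, so for two such weighted shifts
(by `r` with weights `a`, by `s` with weights `b`) the composite `T₁^{+−} T₂^{−+}` has a nonzero
diagonal entry at `z^m e_i`, `m < 0`, only when `r + s = 0` and `m + s ≥ 0`, where it is
`a (m + s) * b m`. Reindexing the other term of the commutator by `m ↦ m + s`, `c_Lie` becomes
`n` times a signed sum of `a (m + s) * b m` over the integers between `-s` and `0`. For the Virasoro
operators this summand is a monic quadratic in `m`, which telescopes against a cubic.
-/

open HahnSeries Finset

lemma fd_single (a : ℤ) (c : ℂ) : fd (single a c) = single (a - 1) (a * c) := by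
  ext k
  simp only [fd, coeff_single]
  by_cases h : k = a - 1
  · subst h
    simp
  · rw [if_neg (by omega), if_neg h, mul_zero]

lemma fd_zero : fd 0 = 0 := by
  ext
  simp [fd]

lemma tneg_single (a : ℤ) (c : ℂ) : tneg (single a c) = single a (if a < 0 then c else 0) := by
  ext k
  simp only [tneg, coeff_single]
  split_ifs <;> simp_all

lemma tpos_single (a : ℤ) (c : ℂ) : tpos (single a c) = single a (if 0 ≤ a then c else 0) := by
  ext k
  simp only [tpos, coeff_single]
  split_ifs <;> simp_all

lemma projM_single {n : ℕ} (i : Fin n) (f : K) : projM (Pi.single i f) = Pi.single i (tneg f) :=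
  funext <| Pi.apply_single (fun _ => tneg) (fun _ => by ext; simp [tneg]) i f

lemma projP_single {n : ℕ} (i : Fin n) (f : K) : projP (Pi.single i f) = Pi.single i (tpos f) :=
  funext <| Pi.apply_single (fun _ => tpos) (fun _ => by ext; simp [tpos]) i f

lemma bas_eq_single (n : ℕ) (m : ℤ) (i : Fin n) : bas n m i = Pi.single i (single m 1) := by
  funext j
  simp [bas, Pi.single_apply]

def IsWeightedShift {n : ℕ} (T : V n → V n) (r : ℤ) (a : ℤ → ℂ) : Prop :=
  ∀ (m : ℤ) (c : ℂ) (i : Fin n),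
    T (Pi.single i (single m c)) = Pi.single i (single (m + r) (a m * c))

lemma Lb_isWeightedShift (n : ℕ) (β r : ℤ) :
    IsWeightedShift (Lb n β r) r (fun m => m + β * (r + 1)) := by
  intro m c i
  funext j
  refine Pi.apply_single (fun _ f => single (r + 1) 1 * fd f + (β * (r + 1)) • (single r 1 * f))
    (fun _ => by simp [fd_zero]) i (single m c) j |>.trans ?_
  congr 1
  rw [fd_single, single_mul_single, single_mul_single]
  ext k
  simp only [coeff_add, coeff_smul, coeff_single]
  by_cases hk : k = m + r
  · rw [if_pos (by omega), if_pos (by omega), if_pos hk]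
    ring
  · rw [if_neg (by omega), if_neg (by omega), if_neg hk]
    simp

section WeightedShift

variable {n : ℕ} {T₁ T₂ : V n → V n} {r s : ℤ} {a b : ℤ → ℂ}

lemma coeff_projM_projP_bas (h₁ : IsWeightedShift T₁ r a) (h₂ : IsWeightedShift T₂ s b)
    (m : ℤ) (i : Fin n) :
    (projM (T₁ (projP (T₂ (projM (bas n m i))))) i).coeff m =
      if r + s = 0 ∧ m ∈ Ico (-s) 0 then a (m + s) * b m else 0 := by
  rw [bas_eq_single, projM_single, tneg_single, h₂, projP_single, tpos_single, h₁, projM_single,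
    tneg_single, Pi.single_eq_same, coeff_single]
  simp only [mem_Ico]
  split_ifs <;> first | (exfalso; omega) | simp

lemma coeff_commPM_bas (h₁ : IsWeightedShift T₁ r a) (h₂ : IsWeightedShift T₂ s b)
    (m : ℤ) (i : Fin n) :
    (commPM T₁ T₂ (bas n m i) i).coeff m =
      if r + s = 0 then
        (if m ∈ Ico (-s) 0 then a (m + s) * b m else 0) -
          (if m ∈ Ico (-r) 0 then b (m + r) * a m else 0)
      else 0 := by
  rw [commPM, Pi.sub_apply, coeff_sub, coeff_projM_projP_bas h₁ h₂,
    coeff_projM_projP_bas h₂ h₁, add_comm s r]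
  split_ifs <;> simp_all

lemma cLie_of_isWeightedShift (h₁ : IsWeightedShift T₁ r a) (h₂ : IsWeightedShift T₂ s b) :
    cLie n T₁ T₂ = if r + s = 0 then
      n * (∑ m ∈ Ico (-s) 0, a (m + s) * b m - ∑ m ∈ Ico 0 (-s), a (m + s) * b m) else 0 := by
  set f₁ : ℤ → ℂ := (Ico (-s) 0 : Set ℤ).indicator fun m => a (m + s) * b m
  set f₂ : ℤ → ℂ := (Ico (-r) 0 : Set ℤ).indicator fun m => b (m + r) * a m
  have hterm (m : ℤ) : ∑ᶠ (_ : m < 0) (i : Fin n), (commPM T₁ T₂ (bas n m i) i).coeff m =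
      if r + s = 0 then n * (f₁ m - f₂ m) else 0 := by
    simp only [finsum_eq_sum_of_fintype, coeff_commPM_bas h₁ h₂, sum_const, card_univ,
      Fintype.card_fin, nsmul_eq_mul, finsum_eq_if, f₁, f₂, Set.indicator_apply, mem_coe, mem_Ico]
    split_ifs <;> first | (exfalso; omega) | simp
  have hfin : ∀ f : ℤ → ℂ, ∀ S : Finset ℤ, Function.HasFiniteSupport ((S : Set ℤ).indicator f) :=
    fun _ S => S.finite_toSet.subset Set.support_indicator_subset
  rw [cLie, finsum_congr hterm]
  split_ifs with hrs
  · obtain rfl : r = -s := by omega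
    rw [← mul_finsum, finsum_sub_distrib (hfin _ _) (hfin _ _), ← finsum_mem_def, ← finsum_mem_def,
      finsum_mem_coe_finset, finsum_mem_coe_finset, neg_neg,
      show Ico s 0 = Ico (0 + s) (-s + s) by simp, ← sum_Ico_add']
    simp only [add_neg_cancel_right, mul_comm (b _)]
  · simp

end WeightedShift

lemma Int.sum_Ico_sub {G : Type*} [AddCommGroup G] (F : ℤ → G) {p q : ℤ} (h : p ≤ q) :
    ∑ m ∈ Ico p q, (F (m + 1) - F m) = F q - F p := by
  induction q, h using Int.leInduction with
  | base => simp
  | succ q hpq ih => rw [← sum_Ico_add_eq_sum_Ico_add_one hpq, ih]; abel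

lemma Int.sum_Ico_sub_sub_sum_Ico_sub {G : Type*} [AddCommGroup G] (F : ℤ → G) (p q : ℤ) :
    ∑ m ∈ Ico p q, (F (m + 1) - F m) - ∑ m ∈ Ico q p, (F (m + 1) - F m) = F q - F p := by
  rcases le_total p q with h | h
  · rw [Int.sum_Ico_sub F h, Ico_eq_empty_of_le h, sum_empty, sub_zero]
  · rw [Int.sum_Ico_sub F h, Ico_eq_empty_of_le h, sum_empty, zero_sub, neg_sub]

lemma sum_Ico_sub_sum_Ico_of_quadratic {f : ℤ → ℂ} (A B : ℂ) (q : ℤ)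
    (hf : ∀ m, f m = (m + A) * (m + B)) :
    ∑ m ∈ Ico q 0, f m - ∑ m ∈ Ico 0 q, f m =
      -(q * (q - 1) * (2 * q - 1) / 6 + (A + B) * (q * (q - 1) / 2) + A * B * q) := by
  set F : ℤ → ℂ := fun m =>
    m * (m - 1) * (2 * m - 1) / 6 + (A + B) * (m * (m - 1) / 2) + A * B * m
  have hF (m : ℤ) : f m = F (m + 1) - F m := by
    simp only [hf, F]
    push_cast
    ring
  simp only [hF]
  rw [Int.sum_Ico_sub_sub_sum_Ico_sub]
  simp only [F]
  push_cast
  ring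

theorem cLie_virasoro_general (n : ℕ) (r s β : ℤ) :
    cLie n (Lb n β r) (Lb n β s) =
      if r = -s then
        (n : ℂ) * (((r : ℂ) ^ 3 - r) / 6) * (1 - 6 * (β : ℂ) + 6 * (β : ℂ) ^ 2)
      else 0 := by
  rw [cLie_of_isWeightedShift (Lb_isWeightedShift n β r) (Lb_isWeightedShift n β s)]
  by_cases hrs : r = -s
  · subst hrs
    rw [if_pos (neg_add_cancel s), if_pos rfl,
      sum_Ico_sub_sum_Ico_of_quadratic (s + β * (1 - s)) (β * (s + 1))]
    · push_cast
      ring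
    · intro m
      push_cast
      ring
  · rw [if_neg (by omega), if_neg hrs]

/-- The value of the trace cocycle on the `β`-twisted Virasoro generators:
`c_Lie(L_r^{(β)}, L_s^{(β)}) = n · δ_{r,−s} · ((r³−r)/6) · (1−6β+6β²)`. -/
theorem cLie_virasoro (n : ℕ) (hn : 1 ≤ n) (r s β : ℤ) :
    cLie n (Lb n β r) (Lb n β s) =
      if r = -s then
        (n : ℂ) * (((r : ℂ) ^ 3 - r) / 6) * (1 - 6 * (β : ℂ) + 6 * (β : ℂ) ^ 2)
      else 0 :=
  cLie_virasoro_general n r s β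

end
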